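/- arXiv:1509.05018 — 11 statements merged into one kernel-verified Lean document; each statement's English description precedes it below -/
import Mathlib

section
/- Let f be a homeomorphism of a compact topological space X. Then f is orbit expansive if and only if there is a neighborhood U ⊆ X × X of the diagonal Δ = {(x,x) : x ∈ X} such that whenever x ≠ y there exists n ∈ ℤ with (fⁿ(x), fⁿ(y)) ∉ U. -/
open Set

/-- The `n`-th iterate (`n : ℤ`) of a homeomorphism `f`, as a function. -/
def Homeomorph.zpow {X : Type*} [TopologicalSpace X] (f : X ≃ₜ X) (n : ℤ) : X → X :=
  ⇑(f.toEquiv ^ n)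

/-- `U = {U 0, …, U (l-1)}` is an o-expansive covering for the homeomorphism `f`:
it is a finite open cover such that any two points whose whole orbits stay
`U`-close must coincide. -/
def IsOExpansiveCover {X : Type*} [TopologicalSpace X] {l : ℕ} (f : X ≃ₜ X)
    (U : Fin l → Set X) : Prop :=
  (∀ i, IsOpen (U i)) ∧ (⋃ i, U i) = Set.univ ∧
    ∀ x y : X, (∀ n : ℤ, ∃ i, f.zpow n x ∈ U i ∧ f.zpow n y ∈ U i) → x = y

/-- A homeomorphism is orbit expansive if it admits an o-expansive covering. -/
def OrbitExpansive {X : Type*} [TopologicalSpace X] (f : X ≃ₜ X) : Prop :=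
  ∃ (l : ℕ) (U : Fin l → Set X), IsOExpansiveCover f U

/-- `U` is an r-expansivity covering for `f`: a finite open cover such that for every
open cover `V` and every sequence `k : ℤ → Fin n` there is `N` with
`⋂_{|j| ≤ N} f^j(U (k j))` contained in a member of `V`. -/
def IsRExpansiveCover {X : Type*} [TopologicalSpace X] {n : ℕ} (f : X ≃ₜ X)
    (U : Fin n → Set X) : Prop :=
  (∀ i, IsOpen (U i)) ∧ (⋃ i, U i) = Set.univ ∧
    ∀ V : Set (Set X), (∀ v ∈ V, IsOpen v) → ⋃₀ V = Set.univ →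
      ∀ k : ℤ → Fin n, ∃ N : ℕ, ∃ v ∈ V,
        (⋂ j ∈ Set.Icc (-(N : ℤ)) (N : ℤ), f.zpow j '' U (k j)) ⊆ v

/-- A homeomorphism is refinement expansive if it admits an r-expansivity covering. -/
def RefinementExpansive {X : Type*} [TopologicalSpace X] (f : X ≃ₜ X) : Prop :=
  ∃ (n : ℕ) (U : Fin n → Set X), IsRExpansiveCover f U

/-- `U` is a uniform r-expansivity covering for `f`: `N` can be chosen uniformly in the
sequence `k`. -/
def IsUniformRExpansiveCover {X : Type*} [TopologicalSpace X] {n : ℕ} (f : X ≃ₜ X)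
    (U : Fin n → Set X) : Prop :=
  (∀ i, IsOpen (U i)) ∧ (⋃ i, U i) = Set.univ ∧
    ∀ V : Set (Set X), (∀ v ∈ V, IsOpen v) → ⋃₀ V = Set.univ →
      ∃ N : ℕ, ∀ k : ℤ → Fin n, ∃ v ∈ V,
        (⋂ j ∈ Set.Icc (-(N : ℤ)) (N : ℤ), f.zpow j '' U (k j)) ⊆ v

/-- A homeomorphism is uniformly refinement expansive if it admits a uniform
r-expansivity covering. -/
def UniformlyRefinementExpansive {X : Type*} [TopologicalSpace X] (f : X ≃ₜ X) : Prop :=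
  ∃ (n : ℕ) (U : Fin n → Set X), IsUniformRExpansiveCover f U

/-! A finite open cover `U` of `X` and the neighbourhood `⋃ i, U i ×ˢ U i` of the diagonal
express the same closeness of two points, so `U` is o-expansive exactly when this neighbourhood
separates orbits. On a compact space every neighbourhood of the diagonal contains one of this
form, and separating orbits passes to smaller sets. -/

section

variable {X : Type*} [TopologicalSpace X]

theorem iUnion_prod_self_mem_nhdsSet_diagonal {ι : Type*} {U : ι → Set X}
    (hU : ∀ i, IsOpen (U i)) (hcov : ⋃ i, U i = univ) :
    ⋃ i, U i ×ˢ U i ∈ nhdsSet (diagonal X) := by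
  refine (isOpen_iUnion fun i => (hU i).prod (hU i)).mem_nhdsSet.mpr ?_
  rintro ⟨x, y⟩ (rfl : x = y)
  obtain ⟨i, hi⟩ := mem_iUnion.mp (hcov ▸ mem_univ x)
  exact mem_iUnion.mpr ⟨i, hi, hi⟩

theorem exists_fin_open_cover_iUnion_prod_self_subset [CompactSpace X] {S : Set (X × X)}
    (hS : S ∈ nhdsSet (diagonal X)) :
    ∃ (l : ℕ) (U : Fin l → Set X),
      (∀ i, IsOpen (U i)) ∧ ⋃ i, U i = univ ∧ ⋃ i, U i ×ˢ U i ⊆ S := by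
  obtain ⟨t, U, hUcov, hUS⟩ :=
    TopologicalSpace.exists_finite_open_cover_prod_subset_of_mem_nhds_diagonal_of_compact hS
  refine ⟨t.card, fun i => U (t.equivFin.symm i), fun i => (U _).isOpen, ?_,
    iUnion_subset fun i => hUS _⟩
  rw [t.equivFin.symm.surjective.iUnion_comp fun j => (U j : Set X)]
  exact hUcov.iSup_set_eq_univ

theorem isOExpansiveCover_iff {l : ℕ} (f : X ≃ₜ X) (U : Fin l → Set X) :
    IsOExpansiveCover f U ↔ (∀ i, IsOpen (U i)) ∧ ⋃ i, U i = univ ∧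
      ∀ x y : X, x ≠ y → ∃ n : ℤ, (f.zpow n x, f.zpow n y) ∉ ⋃ i, U i ×ˢ U i := by
  simp only [IsOExpansiveCover, mem_iUnion, mem_prod, not_exists, not_and]
  refine and_congr_right' (and_congr_right' ⟨fun h x y hxy => ?_, fun h x y hclose => ?_⟩)
  · by_contra! hnear
    exact hxy (h x y hnear)
  · by_contra hxy
    obtain ⟨n, hn⟩ := h x y hxy
    obtain ⟨i, hxi, hyi⟩ := hclose n
    exact hn i hxi hyi

end

/-- Proposition 2.4: on a compact space, `f` is orbit expansive iff there is a
neighborhood `U` of the diagonal such that distinct points get separated from `U`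
by some iterate of `f`. -/
theorem orbitExpansive_iff_exists_nhds_diagonal
    {X : Type*} [TopologicalSpace X] [CompactSpace X] (f : X ≃ₜ X) :
    OrbitExpansive f ↔
      ∃ U : Set (X × X), U ∈ nhdsSet (Set.diagonal X) ∧
        ∀ x y : X, x ≠ y → ∃ n : ℤ, (f.zpow n x, f.zpow n y) ∉ U := by
  constructor
  · rintro ⟨l, U, hU⟩
    obtain ⟨hopen, hcov, hsep⟩ := (isOExpansiveCover_iff f U).mp hU
    exact ⟨_, iUnion_prod_self_mem_nhdsSet_diagonal hopen hcov, hsep⟩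
  · rintro ⟨S, hS, hsep⟩
    obtain ⟨l, U, hopen, hcov, hUS⟩ := exists_fin_open_cover_iUnion_prod_self_subset hS
    refine ⟨l, U, (isOExpansiveCover_iff f U).mpr ⟨hopen, hcov, fun x y hxy => ?_⟩⟩
    obtain ⟨n, hn⟩ := hsep x y hxy
    exact ⟨n, fun h => hn (hUS h)⟩
end

section
/- If a topological space X admits an orbit expansive homeomorphism, then X is a T1 space. -/
/-!
If `x ⤳ y`, i.e. every open set containing `y` contains `x`, then the same holds for
`fⁿ x` and `fⁿ y`, since the iterates are continuous. So the member of the cover containing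
`fⁿ y` also contains `fⁿ x`, for every `n`, and o-expansivity forces `x = y`.
-/

open Set

theorem Homeomorph.zpow_eq_coe_zpow {X : Type*} [TopologicalSpace X] (f : X ≃ₜ X) (n : ℤ) :
    f.zpow n = ⇑(f ^ n) := by
  let toPerm : (X ≃ₜ X) →* Equiv.Perm X := MonoidHom.mk' Homeomorph.toEquiv fun _ _ => rfl
  exact congrArg DFunLike.coe (map_zpow toPerm f n).symm

theorem Homeomorph.continuous_zpow {X : Type*} [TopologicalSpace X] (f : X ≃ₜ X) (n : ℤ) :
    Continuous (f.zpow n) :=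
  f.zpow_eq_coe_zpow n ▸ (f ^ n).continuous

theorem IsOExpansiveCover.eq_of_specializes {X : Type*} [TopologicalSpace X] {l : ℕ}
    {f : X ≃ₜ X} {U : Fin l → Set X} (hU : IsOExpansiveCover f U) {x y : X} (hxy : x ⤳ y) :
    x = y := by
  obtain ⟨hU_open, hU_cover, hU_sep⟩ := hU
  refine hU_sep x y fun n => ?_
  obtain ⟨i, hi⟩ := mem_iUnion.mp (hU_cover ▸ mem_univ (f.zpow n y))
  exact ⟨i, (hxy.map (f.continuous_zpow n)).mem_open (hU_open i) hi, hi⟩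

/-- Proposition 2.5: a space admitting an orbit expansive homeomorphism is `T₁`. -/
theorem t1Space_of_orbitExpansive {X : Type*} [TopologicalSpace X]
    (f : X ≃ₜ X) (hf : OrbitExpansive f) : T1Space X := by
  obtain ⟨_, _, hU⟩ := hf
  exact t1Space_iff_specializes_imp_eq.2 fun _ _ => hU.eq_of_specializes
end

section
/- If X is a finite topological space admitting an orbit expansive homeomorphism, then the topology of X is discrete. -/
open Set

/-!
If `x ⤳ y`, then `fⁿ x ⤳ fⁿ y` for every `n`, so each open set containing `fⁿ y` also contains
`fⁿ x`; hence the orbits of `x` and `y` are close for any open cover, and orbit expansivity gives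
`x = y`. Thus `X` is T₁, and a finite T₁ space is discrete.
-/

namespace Homeomorph

variable {X : Type*} [TopologicalSpace X]

def toPerm : (X ≃ₜ X) →* Equiv.Perm X where
  toFun := Homeomorph.toEquiv
  map_one' := rfl
  map_mul' _ _ := rfl

theorem zpow_eq_coe_zpow_s3 (f : X ≃ₜ X) (n : ℤ) : f.zpow n = ⇑(f ^ n) :=
  congrArg DFunLike.coe (map_zpow toPerm f n).symm

theorem continuous_zpow_s3 (f : X ≃ₜ X) (n : ℤ) : Continuous (f.zpow n) := by
  rw [zpow_eq_coe_zpow_s3]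
  exact (f ^ n).continuous

end Homeomorph

theorem OrbitExpansive.t1Space {X : Type*} [TopologicalSpace X] {f : X ≃ₜ X}
    (hf : OrbitExpansive f) : T1Space X := by
  obtain ⟨_, _, hU⟩ := hf
  exact t1Space_iff_specializes_imp_eq.mpr fun _ _ => hU.eq_of_specializes

/-- Remark 2.6: a finite space admitting an orbit expansive homeomorphism is discrete. -/
theorem discreteTopology_of_finite_orbitExpansive {X : Type*} [TopologicalSpace X]
    [Finite X] (f : X ≃ₜ X) (hf : OrbitExpansive f) : DiscreteTopology X :=
  have := hf.t1Space
  Finite.instDiscreteTopology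
end

section
/- Let X be a compact Hausdorff topological space and let f : X → X be an orbit expansive homeomorphism. Then for every metric d on X generating the topology of X, there exists δ > 0 such that whenever x, y ∈ X with x ≠ y, there exists n ∈ ℤ with d(fⁿ(x), fⁿ(y)) ≥ δ. -/
open Set

theorem IsOExpansiveCover.eq_of_forall_dist_lt {X : Type*} [PseudoMetricSpace X] {l : ℕ}
    {f : X ≃ₜ X} {U : Fin l → Set X} (hU : IsOExpansiveCover f U) {δ : ℝ}
    (hδ : ∀ z, ∃ i, Metric.ball z δ ⊆ U i) {x y : X}
    (hxy : ∀ n : ℤ, dist (f.zpow n x) (f.zpow n y) < δ) : x = y := by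
  refine hU.2.2 x y fun n => ?_
  obtain ⟨i, hi⟩ := hδ (f.zpow n x)
  have hx : f.zpow n x ∈ Metric.ball (f.zpow n x) δ :=
    Metric.mem_ball_self (dist_nonneg.trans_lt (hxy n))
  have hy : f.zpow n y ∈ Metric.ball (f.zpow n x) δ := by
    rw [Metric.mem_ball, dist_comm]
    exact hxy n
  exact ⟨i, hi hx, hi hy⟩

theorem exists_expansivity_constant_of_orbitExpansive_general
    {X : Type*} [t : TopologicalSpace X] [CompactSpace X]
    (f : X ≃ₜ X) (hf : OrbitExpansive f)
    (m : MetricSpace X) (hm : m.toUniformSpace.toTopologicalSpace = t) :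
    ∃ δ : ℝ, 0 < δ ∧ ∀ x y : X, x ≠ y →
      ∃ n : ℤ, δ ≤ @dist X m.toDist (f.zpow n x) (f.zpow n y) := by
  subst hm
  obtain ⟨l, U, hU⟩ := hf
  obtain ⟨δ, hδ, hleb⟩ := lebesgue_number_lemma_of_metric isCompact_univ hU.1 hU.2.1.ge
  refine ⟨δ, hδ, fun x y hxy => ?_⟩
  by_contra! hclose
  exact hxy (hU.eq_of_forall_dist_lt (fun z => hleb z (mem_univ z)) hclose)

/-- Remark 2.10: if `X` is compact Hausdorff and `f` is orbit expansive, then every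
metric generating the topology of `X` is an expansivity metric for `f`. -/
theorem exists_expansivity_constant_of_orbitExpansive
    {X : Type*} [t : TopologicalSpace X] [CompactSpace X] [T2Space X]
    (f : X ≃ₜ X) (hf : OrbitExpansive f)
    (m : MetricSpace X) (hm : m.toUniformSpace.toTopologicalSpace = t) :
    ∃ δ : ℝ, 0 < δ ∧ ∀ x y : X, x ≠ y →
      ∃ n : ℤ, δ ≤ @dist X m.toDist (f.zpow n x) (f.zpow n y) :=
  exists_expansivity_constant_of_orbitExpansive_general (t := t) f hf m hm
end

section
/- Let X be an infinite set equipped with the cofinite topology (a set is open if and only if it is empty or has finite complement). Then no homeomorphism of X is orbit expansive. -/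
/-!
Points off the finite set `F = ⋃ {U_iᶜ | U_i ≠ ∅}` lie in every nonempty member of the cover,
so a pair `x ≠ y` whose orbits never visit `F` at the same time violates o-expansivity. Such a
pair exists: if every point visited `F` at infinitely many times, each point would be periodic
with its orbit through `F`, and `X` would be a finite union of finite orbits. So some `x` visits
`F` only at finitely many times `n`, and any `y` outside `x` and the finitely many `f⁻ⁿ F` works.
-/

open Set

theorem exists_finite_forall_notMem_exists_mem_and_mem {X ι : Type*} [Finite ι]
    {U : ι → Set X} (hU : ∀ i, U i = ∅ ∨ (U i)ᶜ.Finite) (hcover : ⋃ i, U i = univ) :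
    ∃ F : Set X, F.Finite ∧ ∀ x ∉ F, ∀ y, ∃ i, x ∈ U i ∧ y ∈ U i := by
  refine ⟨⋃ i ∈ {i | (U i)ᶜ.Finite}, (U i)ᶜ, (toFinite _).biUnion fun i hi => hi, ?_⟩
  intro x hx y
  obtain ⟨i, hy⟩ := iUnion_eq_univ_iff.1 hcover y
  have hcofinite : (U i)ᶜ.Finite := (hU i).resolve_left (nonempty_of_mem hy).ne_empty
  refine ⟨i, ?_, hy⟩
  by_contra hxi
  exact hx (mem_biUnion hcofinite hxi)

namespace Equiv.Perm

variable {X : Type*} (σ : Perm X)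

theorem finite_range_zpow_apply_of_apply_eq {x : X} {a b : ℤ} (hab : a ≠ b)
    (h : (σ ^ a) x = (σ ^ b) x) : (range fun n : ℤ => (σ ^ n) x).Finite := by
  have hfix : σ ^ (a - b) • x = x := by
    rw [Equiv.Perm.smul_def, sub_eq_neg_add, zpow_add, mul_apply, h, ← mul_apply, ← zpow_add,
      neg_add_cancel, zpow_zero, one_apply]
  have hperiod : (MulAction.period σ x : ℤ) ≠ 0 := by
    intro h0
    rw [MulAction.zpow_smul_eq_iff_period_dvd, h0, zero_dvd_iff, sub_eq_zero] at hfix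
    exact hab hfix
  refine ((finite_Ico 0 (MulAction.period σ x : ℤ)).image fun n => (σ ^ n) x).subset ?_
  rintro _ ⟨n, rfl⟩
  refine ⟨n % MulAction.period σ x, ⟨Int.emod_nonneg n hperiod, Int.emod_lt_of_pos n ?_⟩, ?_⟩
  · exact lt_of_le_of_ne (Int.natCast_nonneg _) (Ne.symm hperiod)
  · exact MulAction.zpow_mod_period_smul (g := σ) (a := x) n

theorem exists_finite_setOf_zpow_apply_mem [Infinite X] {F : Set X} (hF : F.Finite) :
    ∃ x, {n : ℤ | (σ ^ n) x ∈ F}.Finite := by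
  by_contra! hinf
  have horbit : ∀ z, (range fun n : ℤ => (σ ^ n) z).Finite := fun z => by
    obtain ⟨a, -, b, -, hab, h⟩ :=
      (hinf z).exists_ne_map_eq_of_mapsTo (f := fun n : ℤ => (σ ^ n) z) (fun _ hn => hn) hF
    exact σ.finite_range_zpow_apply_of_apply_eq hab h
  refine infinite_univ (α := X) ((hF.biUnion fun z _ => horbit z).subset fun x _ => ?_)
  obtain ⟨n, hn⟩ := (hinf x).nonempty
  refine mem_biUnion hn ⟨-n, ?_⟩
  simp only [← mul_apply, ← zpow_add, neg_add_cancel, zpow_zero, one_apply]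

theorem exists_ne_forall_zpow_apply_notMem_or_notMem [Infinite X] {F : Set X}
    (hF : F.Finite) : ∃ x y, x ≠ y ∧ ∀ n : ℤ, (σ ^ n) x ∉ F ∨ (σ ^ n) y ∉ F := by
  obtain ⟨x, hx⟩ := σ.exists_finite_setOf_zpow_apply_mem hF
  have hbad : (insert x (⋃ n ∈ {n : ℤ | (σ ^ n) x ∈ F}, (σ ^ n) ⁻¹' F)).Finite :=
    (hx.biUnion fun n _ => hF.preimage (σ ^ n).injective.injOn).insert x
  obtain ⟨y, hy⟩ := hbad.infinite_compl.nonempty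
  rw [mem_compl_iff, mem_insert_iff, not_or, mem_iUnion₂, not_exists] at hy
  refine ⟨x, y, Ne.symm hy.1, fun n => ?_⟩
  by_cases hn : (σ ^ n) x ∈ F
  · exact Or.inr fun hyn => hy.2 n ⟨hn, hyn⟩
  · exact Or.inl hn

end Equiv.Perm

/-- Proposition 2.13: no homeomorphism of an infinite set with the cofinite topology
is orbit expansive. -/
theorem cofinite_no_orbitExpansive {X : Type*} [TopologicalSpace X] [Infinite X]
    (htop : ∀ s : Set X, IsOpen s ↔ s = ∅ ∨ sᶜ.Finite)
    (f : X ≃ₜ X) : ¬ OrbitExpansive f := by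
  rintro ⟨l, U, hopen, hcover, hexp⟩
  obtain ⟨F, hF, hshare⟩ :=
    exists_finite_forall_notMem_exists_mem_and_mem (fun i => (htop _).1 (hopen i)) hcover
  obtain ⟨x, y, hne, havoid⟩ :=
    Equiv.Perm.exists_ne_forall_zpow_apply_notMem_or_notMem f.toEquiv hF
  refine hne (hexp x y fun n => ?_)
  rcases havoid n with hx | hy
  · exact hshare _ hx _
  · exact (hshare _ hy _).imp fun _ => And.symm
end

section
/- Let f : X → X be a homeomorphism of a topological space X admitting an o-expansive covering U = {U_1,...,U_l} of cardinality l. Then for each n ≥ 1, the set {p ∈ X : fⁿ(p) = p} of points of period n has at most l^n elements. -/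
open Set

/-! The orbit of a point of period `n` is determined by its first `n` iterates, so by
o-expansivity such a point is determined by its itinerary: the word in `Fin n → Fin l`
recording, for each `j < n`, a chosen cover element containing its `j`-th iterate. -/

theorem Equiv.Perm.zpow_apply_emod {α : Type*} {σ : Equiv.Perm α} {n : ℤ} {x : α}
    (hx : (σ ^ n) x = x) (m : ℤ) : (σ ^ m) x = (σ ^ (m % n)) x := by
  have hmul : (σ ^ (n * (m / n))) x = x := by
    rw [zpow_mul]
    exact Function.IsFixedPt.perm_zpow hx (m / n)
  conv_lhs => rw [← Int.emod_add_mul_ediv m n, zpow_add, Equiv.Perm.mul_apply, hmul]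

theorem Homeomorph.exists_fin_forall_zpow_eq {X : Type*} [TopologicalSpace X]
    (f : X ≃ₜ X) {n : ℕ} (hn : 0 < n) (m : ℤ) :
    ∃ j : Fin n, ∀ x, f.zpow n x = x → f.zpow m x = f.zpow j x := by
  have hn' : (0 : ℤ) < n := by exact_mod_cast hn
  have h0 : 0 ≤ m % n := Int.emod_nonneg m hn'.ne'
  have hlt : m % n < n := Int.emod_lt_of_pos m hn'
  refine ⟨⟨(m % n).toNat, by omega⟩, fun x hx => ?_⟩
  rw [Fin.val_mk, Int.toNat_of_nonneg h0]
  exact Equiv.Perm.zpow_apply_emod hx m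

theorem IsOExpansiveCover.eq_of_zpow_eq_self {X : Type*} [TopologicalSpace X] {l : ℕ}
    {f : X ≃ₜ X} {U : Fin l → Set X} (hU : IsOExpansiveCover f U) {n : ℕ} (hn : 0 < n)
    {p q : X} (hp : f.zpow n p = p) (hq : f.zpow n q = q)
    (h : ∀ j : Fin n, ∃ i, f.zpow j p ∈ U i ∧ f.zpow j q ∈ U i) : p = q := by
  refine hU.2.2 p q fun m => ?_
  obtain ⟨j, hj⟩ := f.exists_fin_forall_zpow_eq hn m
  rw [hj p hp, hj q hq]
  exact h j

/-- Proposition 2.15: if `f` has an o-expansive covering with `l` elements then for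
each `n ≥ 1` there are at most `l ^ n` points of period `n`. -/
theorem card_periodic_le_of_oExpansiveCover {X : Type*} [TopologicalSpace X] {l : ℕ}
    (f : X ≃ₜ X) (U : Fin l → Set X) (hU : IsOExpansiveCover f U)
    (n : ℕ) (hn : 1 ≤ n) :
    {p : X | f.zpow (n : ℤ) p = p}.encard ≤ ((l ^ n : ℕ) : ℕ∞) := by
  choose index mem_index using Set.iUnion_eq_univ_iff.mp hU.2.1
  let itinerary (p : X) (j : Fin n) : Fin l := index (f.zpow j p)
  have itinerary_injOn : Set.InjOn itinerary {p | f.zpow n p = p} := by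
    intro p hp q hq h
    refine hU.eq_of_zpow_eq_self hn hp hq fun j => ⟨index (f.zpow j p), mem_index _, ?_⟩
    have hj : index (f.zpow j p) = index (f.zpow j q) := congrFun h j
    exact hj ▸ mem_index _
  calc {p : X | f.zpow n p = p}.encard
      ≤ (Set.univ : Set (Fin n → Fin l)).encard :=
        Set.encard_le_encard_of_injOn (Set.mapsTo_univ _ _) itinerary_injOn
    _ = ((l ^ n : ℕ) : ℕ∞) := by simp [ENat.card_eq_coe_fintype_card]
end

section
/- Let f : X → X be an orbit expansive homeomorphism of a topological space X. Then the set of periodic points of f, i.e. {p ∈ X : fⁿ(p) = p for some n ≥ 1}, is countable. -/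
open Set

/-! Fix a finite open cover `U` and a choice `c x` of a member containing `x`. The itinerary
`n ↦ c (fⁿ x)` of a point of period `m` is an `m`-periodic sequence over a finite alphabet, and
there are only countably many such sequences. O-expansivity says exactly that a point is
determined by its itinerary. -/

theorem Function.Periodic.apply_emod {α : Type*} {g : ℤ → α} {m : ℤ} (hg : Function.Periodic g m)
    (n : ℤ) : g (n % m) = g n := by
  rw [Int.emod_def, mul_comm]
  exact hg.sub_int_mul_eq _

theorem Function.injOn_restrict_fin_setOf_periodic {α : Type*} {m : ℕ} (hm : 0 < m) :
    Set.InjOn (fun (g : ℤ → α) (i : Fin m) => g i) {g | Function.Periodic g m} := by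
  intro g hg g' hg' h
  funext n
  have hlt : (n % m).toNat < m := by
    have := Int.emod_lt_of_pos n (show (0 : ℤ) < m by omega)
    omega
  have hcast : ((n % m).toNat : ℤ) = n % m := Int.toNat_of_nonneg (Int.emod_nonneg n (by omega))
  have := congrFun h ⟨_, hlt⟩
  simp only [hcast] at this
  rwa [hg.apply_emod, hg'.apply_emod] at this

theorem countable_setOf_exists_periodic_int {α : Type*} [Countable α] :
    {g : ℤ → α | ∃ m : ℕ, 1 ≤ m ∧ Function.Periodic g m}.Countable := by
  have hcount : ∀ m : ℕ, {g : ℤ → α | Function.Periodic g (m + 1 : ℕ)}.Countable := fun m =>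
    Set.MapsTo.countable_of_injOn (Set.mapsTo_univ _ _)
      (Function.injOn_restrict_fin_setOf_periodic m.succ_pos) Set.countable_univ
  refine (Set.countable_iUnion hcount).mono ?_
  rintro g ⟨m, hm, hg⟩
  exact Set.mem_iUnion.2 ⟨m - 1, by rwa [Nat.sub_add_cancel hm]⟩

namespace Homeomorph

variable {X : Type*} [TopologicalSpace X] (f : X ≃ₜ X)

theorem zpow_add_apply (a b : ℤ) (x : X) : f.zpow (a + b) x = f.zpow a (f.zpow b x) := by
  simp only [Homeomorph.zpow, zpow_add, Equiv.Perm.mul_apply]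

def itinerary {ι : Type*} (c : X → ι) (x : X) : ℤ → ι := fun n => c (f.zpow n x)

theorem periodic_itinerary {ι : Type*} (c : X → ι) {x : X} {m : ℤ} (hx : f.zpow m x = x) :
    Function.Periodic (f.itinerary c x) m := fun n => by
  simp only [itinerary, zpow_add_apply, hx]

end Homeomorph

theorem IsOExpansiveCover.injective_itinerary {X : Type*} [TopologicalSpace X] {l : ℕ}
    {f : X ≃ₜ X} {U : Fin l → Set X} (hU : IsOExpansiveCover f U) {c : X → Fin l}
    (hc : ∀ x, x ∈ U (c x)) : Function.Injective (f.itinerary c) := fun x y hxy =>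
  hU.2.2 x y fun n => ⟨c (f.zpow n x), hc _, by
    rw [show c (f.zpow n x) = c (f.zpow n y) from congrFun hxy n]
    exact hc _⟩

/-- Proposition 2.15: the set of periodic points of an orbit expansive homeomorphism
is countable. -/
theorem countable_periodicPts_of_orbitExpansive {X : Type*} [TopologicalSpace X]
    (f : X ≃ₜ X) (hf : OrbitExpansive f) :
    {p : X | ∃ n : ℕ, 1 ≤ n ∧ f.zpow (n : ℤ) p = p}.Countable := by
  obtain ⟨l, U, hU⟩ := hf
  choose c hc using Set.iUnion_eq_univ_iff.1 hU.2.1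
  refine (countable_setOf_exists_periodic_int.preimage (hU.injective_itinerary hc)).mono ?_
  rintro p ⟨n, hn, hp⟩
  exact ⟨n, hn, f.periodic_itinerary c hp⟩
end

section
/- Let f : X → X be a homeomorphism of a topological space X. If a finite open cover U = {U_1,...,U_n} of X is an r-expansivity covering for f, then U is a uniform r-expansivity covering for f. In particular, every refinement expansive homeomorphism is uniformly refinement expansive. -/
/-!
Give the sequence space `ℤ → Fin n` its product topology, which is compact by Tychonoff. For a
fixed open cover `V`, the set `⋂_{|j| ≤ N} f^j(U (k j))` depends only on the window
`k|[-N, N]` and shrinks as `N` grows, so a bound `N` that works for `k` works on a whole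
cylinder neighbourhood of `k` and for every larger `N`. Compactness then yields one `N` for all
sequences.
-/

open Set

open Filter Topology

theorem CompactSpace.exists_forall_of_monotone_of_eventually {Y : Type*} [TopologicalSpace Y]
    [CompactSpace Y] {P : Y → ℕ → Prop} (hmono : ∀ y, Monotone (P y))
    (hloc : ∀ y, ∃ N, ∀ᶠ y' in 𝓝 y, P y' N) : ∃ N, ∀ y, P y N := by
  have hprod : ∀ y ∈ univ, {z : ℕ × Y | P z.2 z.1} ∈ atTop ×ˢ 𝓝 y := fun y _ => by
    obtain ⟨N, hN⟩ := hloc y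
    exact ((eventually_ge_atTop N).prod_mk hN).mono fun z hz => hmono z.2 hz.1 hz.2
  have hunif := isCompact_univ.mem_prod_nhdsSet_of_forall hprod
  rw [nhdsSet_univ] at hunif
  exact Eventually.exists (f := atTop) (mem_prod_top.1 hunif)

theorem eventually_nhds_eqOn_of_finite {ι α : Type*} [TopologicalSpace α] [DiscreteTopology α]
    {s : Set ι} (hs : s.Finite) (k : ι → α) : ∀ᶠ k' in 𝓝 k, EqOn k' k s :=
  mem_of_superset (set_pi_mem_nhds hs fun j _ => mem_nhds_discrete.2 (mem_singleton (k j)))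
    fun _ hk' _ hj => hk' _ hj

theorem antitone_biInter_Icc {X : Type*} (s : ℤ → Set X) :
    Antitone fun N : ℕ => ⋂ j ∈ Icc (-(N : ℤ)) N, s j := fun M N hMN =>
  biInter_subset_biInter_left (Icc_subset_Icc (by omega) (by omega))

theorem IsRExpansiveCover.isUniformRExpansiveCover {X : Type*} [TopologicalSpace X] {n : ℕ}
    {f : X ≃ₜ X} {U : Fin n → Set X} (hU : IsRExpansiveCover f U) :
    IsUniformRExpansiveCover f U := by
  obtain ⟨hopen, hcover, hexp⟩ := hU
  refine ⟨hopen, hcover, fun V hVopen hVcover => ?_⟩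
  apply CompactSpace.exists_forall_of_monotone_of_eventually
  · rintro k M N hMN ⟨v, hv, hsub⟩
    exact ⟨v, hv, (antitone_biInter_Icc _ hMN).trans hsub⟩
  · intro k
    obtain ⟨N, v, hv, hsub⟩ := hexp V hVopen hVcover k
    have hwindow := eventually_nhds_eqOn_of_finite (finite_Icc (-(N : ℤ)) N) k
    refine ⟨N, hwindow.mono fun k' hk' => ⟨v, hv, ?_⟩⟩
    exact (biInter_mono subset_rfl fun j hj => by rw [hk' hj]).trans hsub

/-- Theorem 3.7: every r-expansivity covering is a uniform r-expansivity covering;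
in particular every refinement expansive homeomorphism is uniformly refinement
expansive. -/
theorem rExpansiveCover_uniform {X : Type*} [TopologicalSpace X] (f : X ≃ₜ X) :
    (∀ (n : ℕ) (U : Fin n → Set X),
        IsRExpansiveCover f U → IsUniformRExpansiveCover f U) ∧
      (RefinementExpansive f → UniformlyRefinementExpansive f) :=
  ⟨fun _ _ => IsRExpansiveCover.isUniformRExpansiveCover,
    fun ⟨n, U, hU⟩ => ⟨n, U, hU.isUniformRExpansiveCover⟩⟩
end

section
/- If a topological space X admits a refinement expansive homeomorphism, then X is compact. -/
open Set

/-!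
Every point of `X` follows an itinerary `k : ℤ → Fin n`, i.e. lies in `f^j (U (k j))` for all
`j`. Given an open cover `V`, each itinerary has a finite window `[-N, N]` whose cylinder
`⋂_{|j| ≤ N} f^j (U (k j))` lies in a member of `V`, and this stays true for all itineraries
agreeing with it on that window. By Tychonoff the space of itineraries is compact, so finitely
many windows, hence finitely many members of `V`, suffice to cover `X`.
-/

open Topology

theorem Homeomorph.zpow_surjective {X : Type*} [TopologicalSpace X] (f : X ≃ₜ X) (n : ℤ) :
    Function.Surjective (f.zpow n) :=
  (f.toEquiv ^ n).surjective

theorem exists_finset_iUnion_eq_univ_of_forall_cylinder_subset {X ι κ ι' : Type*} [Finite κ]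
    {A : ι → κ → Set X} (hA : ∀ j, ⋃ c, A j c = univ) {V : ι' → Set X}
    (hV : ∀ k : ι → κ, ∃ J : Set ι, J.Finite ∧ ∃ i, ⋂ j ∈ J, A j (k j) ⊆ V i) :
    ∃ t : Finset ι', ⋃ i ∈ t, V i = univ := by
  classical
  let _ : TopologicalSpace κ := ⊥
  have : DiscreteTopology κ := ⟨rfl⟩
  choose J hJ i hi using hV
  have window_mem_nhds : ∀ k : ι → κ, (J k).pi (fun j => {k j}) ∈ 𝓝 k := fun k =>
    (isOpen_set_pi (hJ k) fun _ _ => isOpen_discrete _).mem_nhds fun _ _ => rfl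
  obtain ⟨t, ht⟩ := CompactSpace.elim_nhds_subcover _ window_mem_nhds
  have itinerary (x : X) (j : ι) : ∃ c, x ∈ A j c := mem_iUnion.1 (hA j ▸ mem_univ x)
  choose itin hitin using itinerary
  refine ⟨t.image i, eq_univ_of_forall fun x => ?_⟩
  have hx : itin x ∈ ⋃ k ∈ t, (J k).pi fun j => {k j} := by rw [ht]; trivial
  obtain ⟨k, hk, hxk⟩ := mem_iUnion₂.1 hx
  refine mem_iUnion₂.2 ⟨i k, Finset.mem_image_of_mem i hk, hi k ?_⟩
  exact mem_iInter₂.2 fun j hj => (hxk j hj : itin x j = k j) ▸ hitin x j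

/-- Corollary 3.8: a space admitting a refinement expansive homeomorphism is compact. -/
theorem compactSpace_of_refinementExpansive {X : Type*} [TopologicalSpace X]
    (f : X ≃ₜ X) (hf : RefinementExpansive f) : CompactSpace X := by
  obtain ⟨n, U, -, hUcover, hexp⟩ := hf
  refine ⟨isCompact_of_finite_subcover fun W hWopen hWcover => ?_⟩
  have hcyl := hexp (range W) (forall_mem_range.2 hWopen)
    (by rw [sUnion_range]; exact univ_subset_iff.1 hWcover)
  have hcover (j : ℤ) : ⋃ c, f.zpow j '' U c = univ := by
    rw [← image_iUnion, hUcover, image_univ_of_surjective (f.zpow_surjective j)]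
  obtain ⟨t, ht⟩ := exists_finset_iUnion_eq_univ_of_forall_cylinder_subset hcover fun k =>
    let ⟨N, _, ⟨i, hi⟩, hsub⟩ := hcyl k
    ⟨_, finite_Icc _ _, i, hi ▸ hsub⟩
  exact ⟨t, ht.ge⟩
end

section
/- Let f : X → X be a refinement expansive homeomorphism of a T1 topological space X. Then f is orbit expansive. -/
open Set

/-!
If the orbits of `x ≠ y` follow a common itinerary through an r-expansivity covering `U`, then
both points lie in every finite intersection `⋂_{|j| ≤ N} f^j(U (k j))` for the reversed
itinerary `k`. In a `T₁` space `{{x}ᶜ, {y}ᶜ}` is an open cover, and no set containing both `x`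
and `y` lies in one of its members, contradicting refinement expansivity.
-/

theorem Homeomorph.zpow_apply_zpow_neg {X : Type*} [TopologicalSpace X] (f : X ≃ₜ X)
    (j : ℤ) (x : X) : f.zpow j (f.zpow (-j) x) = x := by
  simp only [Homeomorph.zpow, ← Equiv.Perm.mul_apply, ← zpow_add, add_neg_cancel, zpow_zero,
    Equiv.Perm.one_apply]

theorem sUnion_pair_compl_singleton {X : Type*} {x y : X} (hxy : x ≠ y) :
    ⋃₀ ({{x}ᶜ, {y}ᶜ} : Set (Set X)) = univ := by
  rw [sUnion_pair, ← compl_inter, singleton_inter_eq_empty.mpr (mt mem_singleton_iff.mp hxy),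
    compl_empty]

namespace IsRExpansiveCover

variable {X : Type*} [TopologicalSpace X] {n : ℕ} {f : X ≃ₜ X} {U : Fin n → Set X}

theorem subsingleton_iInter_image [T1Space X] (hU : IsRExpansiveCover f U) (k : ℤ → Fin n) :
    (⋂ j, f.zpow j '' U (k j)).Subsingleton := by
  intro x hx y hy
  by_contra hxy
  have hopen : ∀ v ∈ ({{x}ᶜ, {y}ᶜ} : Set (Set X)), IsOpen v := by
    rintro v (rfl | rfl) <;> exact isOpen_compl_singleton
  obtain ⟨N, v, hv, hsub⟩ := hU.2.2 _ hopen (sUnion_pair_compl_singleton hxy) k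
  have hfinite : (⋂ j, f.zpow j '' U (k j)) ⊆ ⋂ j ∈ Icc (-(N : ℤ)) N, f.zpow j '' U (k j) :=
    iInter_mono fun j => subset_iInter fun _ => subset_rfl
  rcases hv with rfl | rfl
  · exact hsub (hfinite hx) rfl
  · exact hsub (hfinite hy) rfl

theorem isOExpansiveCover [T1Space X] (hU : IsRExpansiveCover f U) : IsOExpansiveCover f U := by
  refine ⟨hU.1, hU.2.1, fun x y hxy => ?_⟩
  choose i hix hiy using hxy
  have mem_iInter_reversed :
      ∀ z, (∀ m, f.zpow m z ∈ U (i m)) → z ∈ ⋂ j, f.zpow j '' U (i (-j)) :=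
    fun z hz => mem_iInter.mpr fun j => ⟨f.zpow (-j) z, hz (-j), f.zpow_apply_zpow_neg j z⟩
  exact hU.subsingleton_iInter_image _ (mem_iInter_reversed x hix) (mem_iInter_reversed y hiy)

end IsRExpansiveCover

/-- Theorem 3.11 (first part): on a `T₁` space, refinement expansivity implies orbit
expansivity. -/
theorem orbitExpansive_of_refinementExpansive {X : Type*} [TopologicalSpace X]
    [T1Space X] (f : X ≃ₜ X) (hf : RefinementExpansive f) :
    OrbitExpansive f := by
  obtain ⟨n, U, hU⟩ := hf
  exact ⟨n, U, hU.isOExpansiveCover⟩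
end

section
/- Consider ℤ with the discrete topology and the homeomorphism f : ℤ → ℤ given by f(n) = n + 1. Then the two-element open cover {U_1, U_2} with U_1 = {n ∈ ℤ : n ≥ 0} and U_2 = {n ∈ ℤ : n < 0} is an o-expansive covering for f; in particular f is orbit expansive on a non-compact space. -/
open Set

theorem Homeomorph.zpow_addRight_apply {G : Type*} [TopologicalSpace G] [AddGroup G]
    [SeparatelyContinuousAdd G] (a : G) (n : ℤ) (x : G) :
    (Homeomorph.addRight a).zpow n x = x + n • a := by
  simp [Homeomorph.zpow, Homeomorph.addRight]

theorem eq_of_forall_nonneg_add_iff {G : Type*} [AddCommGroup G] [LinearOrder G]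
    [IsOrderedAddMonoid G] {x y : G} (h : ∀ g : G, 0 ≤ x + g ↔ 0 ≤ y + g) : x = y := by
  have hyx : 0 ≤ x - y := by simpa [sub_eq_add_neg] using (h (-y)).2 (by simp)
  have hxy : 0 ≤ y - x := by simpa [sub_eq_add_neg] using (h (-x)).1 (by simp)
  exact le_antisymm (sub_nonneg.1 hxy) (sub_nonneg.1 hyx)

theorem int_isOExpansiveCover_addRight_one_sign :
    IsOExpansiveCover (Homeomorph.addRight (1 : ℤ)) ![{n : ℤ | 0 ≤ n}, {n : ℤ | n < 0}] := by
  refine ⟨fun _ => isOpen_discrete _, ?_, fun x y h => ?_⟩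
  · ext x
    simpa [Fin.exists_fin_two] using le_or_gt 0 x
  · refine eq_of_forall_nonneg_add_iff fun n => ?_
    -- Two points share a member of the cover exactly when they have the same sign.
    have := h n
    simp only [Fin.exists_fin_two, Homeomorph.zpow_addRight_apply, zsmul_one, Int.cast_id,
      Matrix.cons_val_zero, Matrix.cons_val_one, Set.mem_ofPred_eq] at this
    omega

/-- Example 2.11: on `ℤ` (discrete topology) the translation `n ↦ n + 1` has the
o-expansive covering `{ {n ≥ 0}, {n < 0} }`; in particular it is an orbit expansive
homeomorphism of a non-compact space. -/
theorem intTranslation_orbitExpansive :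
    IsOExpansiveCover (Homeomorph.addRight (1 : ℤ))
        ![{n : ℤ | 0 ≤ n}, {n : ℤ | n < 0}] ∧
      OrbitExpansive (Homeomorph.addRight (1 : ℤ)) ∧ ¬ CompactSpace ℤ :=
  ⟨int_isOExpansiveCover_addRight_one_sign, ⟨2, _, int_isOExpansiveCover_addRight_one_sign⟩,
    not_compactSpace_iff.mpr inferInstance⟩
end
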